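/- arXiv:1509.05348 — 7 statements merged into one kernel-verified Lean document; each statement's English description precedes it below -/
import Mathlib

section
/- Let n ≥ 1, r ≥ 1 an integer, and p ≥ ln(n)/ln(r/(r-1)). Then the number of points of ℤⁿ in the closed ℓ_p ball of radius r equals (2r-1)ⁿ + 2n. -/
/-! If some coordinate of `x ∈ ℤⁿ` has `|xᵢ| ≥ r`, that single term already exhausts the
budget `r ^ p`, so `x = ±r eᵢ`. Otherwise `|xᵢ| ≤ r - 1` for all `i`, and the condition on `p`,
equivalent to `n (r - 1) ^ p ≤ r ^ p`, puts the whole cube `[-(r-1), r-1]ⁿ` inside the ball. -/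

open Finset Real

lemma Pi.single_eq_single_iff_of_ne_zero {ι M : Type*} [DecidableEq ι] [Zero M] {i j : ι}
    {s t : M} (hs : s ≠ 0) : Pi.single i s = (Pi.single j t : ι → M) ↔ i = j ∧ s = t := by
  refine ⟨fun h => ?_, by rintro ⟨rfl, rfl⟩; rfl⟩
  obtain rfl : i = j := by
    by_contra hij
    exact hs (by simpa [Pi.single_eq_of_ne hij] using congr_fun h i)
  exact ⟨rfl, Pi.single_injective i h⟩

lemma nat_mul_rpow_sub_one_le_rpow {n : ℕ} {p r : ℝ} (hp : 0 < p) (hr : 1 ≤ r)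
    (hpr : log n / log (r / (r - 1)) ≤ p) : n * (r - 1) ^ p ≤ r ^ p := by
  -- At `r = 1` the hypothesis is vacuous (`r / (r - 1) = 1 / 0 = 0`), but `(r - 1) ^ p = 0`.
  rcases hr.eq_or_lt with rfl | hr
  · simp [zero_rpow hp.ne']
  rcases n.eq_zero_or_pos with rfl | hn
  · simpa using (rpow_pos_of_pos (by linarith) p).le
  have hs : 0 < r - 1 := by linarith
  have hq : 0 < log (r / (r - 1)) := log_pos ((one_lt_div hs).2 (by linarith))
  have hlog : log n ≤ log ((r / (r - 1)) ^ p) := by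
    rw [log_rpow (by positivity)]
    exact (div_le_iff₀ hq).1 hpr
  have := (log_le_log_iff (by positivity) (by positivity)).1 hlog
  rwa [div_rpow (by linarith) hs.le, le_div_iff₀ (rpow_pos_of_pos hs p)] at this

section

variable {ι : Type*} [Fintype ι]

lemma sum_abs_rpow_le_card_mul {x : ι → ℝ} {p c : ℝ} (hp : 0 ≤ p) (hx : ∀ i, |x i| ≤ c) :
    ∑ i, |x i| ^ p ≤ Fintype.card ι * c ^ p := by
  calc ∑ i, |x i| ^ p ≤ ∑ _i : ι, c ^ p :=
        sum_le_sum fun i _ => rpow_le_rpow (abs_nonneg _) (hx i) hp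
    _ = Fintype.card ι * c ^ p := by simp

lemma abs_eq_and_eq_zero_of_sum_abs_rpow_le {x : ι → ℝ} {p r : ℝ} (hp : 0 < p) (hr : 0 ≤ r)
    {i : ι} (hi : r ≤ |x i|) (hsum : ∑ j, |x j| ^ p ≤ r ^ p) :
    |x i| = r ∧ ∀ j ≠ i, x j = 0 := by
  classical
  have hnonneg : ∀ j ∈ univ.erase i, 0 ≤ |x j| ^ p := fun j _ => by positivity
  have hsplit := sum_erase_add univ (fun j => |x j| ^ p) (mem_univ i)
  have hxi : r ^ p ≤ |x i| ^ p := rpow_le_rpow hr hi hp.le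
  have hrest : ∑ j ∈ univ.erase i, |x j| ^ p = 0 :=
    le_antisymm (by linarith) (sum_nonneg hnonneg)
  refine ⟨le_antisymm ?_ hi, fun j hj => ?_⟩
  · exact (rpow_le_rpow_iff (abs_nonneg _) hr hp).1 (by linarith [sum_nonneg hnonneg])
  · have := (sum_eq_zero_iff_of_nonneg hnonneg).1 hrest j (mem_erase.2 ⟨hj, mem_univ j⟩)
    simpa [rpow_eq_zero (abs_nonneg _) hp.ne'] using this

end

section

variable (ι : Type*) [Fintype ι] [DecidableEq ι]

noncomputable def intLpBall (p r : ℝ) : Set (ι → ℤ) := {x | ∑ i, |(x i : ℝ)| ^ p ≤ r ^ p}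

noncomputable def intBox (m : ℤ) : Finset (ι → ℤ) := Fintype.piFinset fun _ => Icc (-m) m

noncomputable def signedAxisPoints (r : ℤ) : Finset (ι → ℤ) :=
  (univ ×ˢ {r, -r}).image fun q => Pi.single q.1 q.2

variable {ι}

lemma card_intBox {m : ℤ} (hm : 0 ≤ m) :
    (#(intBox ι m) : ℤ) = (2 * m + 1) ^ Fintype.card ι := by
  rw [intBox, Fintype.card_piFinset, prod_const, card_univ, Nat.cast_pow,
    Int.card_Icc_of_le (-m) m (by omega)]
  ring_nf

lemma card_signedAxisPoints {r : ℤ} (hr : r ≠ 0) :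
    #(signedAxisPoints ι r) = 2 * Fintype.card ι := by
  rw [signedAxisPoints, card_image_of_injOn, card_product, card_pair (by omega), card_univ,
    mul_comm]
  rintro ⟨i, s⟩ hs ⟨j, t⟩ - h
  have hs0 : s ≠ 0 := by simp at hs; omega
  simpa using (Pi.single_eq_single_iff_of_ne_zero hs0).1 h

lemma mem_signedAxisPoints {r : ℤ} {x : ι → ℤ} :
    x ∈ signedAxisPoints ι r ↔ ∃ i, |x i| = |r| ∧ ∀ j ≠ i, x j = 0 := by
  simp only [signedAxisPoints, mem_image, mem_product, mem_univ, true_and, mem_insert,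
    mem_singleton, Prod.exists]
  constructor
  · rintro ⟨i, s, hs, rfl⟩
    refine ⟨i, ?_, fun j hj => by simp [hj]⟩
    rcases hs with rfl | rfl <;> simp
  · rintro ⟨i, hi, hzero⟩
    refine ⟨i, x i, abs_eq_abs.1 hi, ?_⟩
    rw [Pi.single, Function.update_eq_iff]
    exact ⟨rfl, fun j hj => (hzero j hj).symm⟩

lemma disjoint_intBox_signedAxisPoints {r : ℤ} (hr : 1 ≤ r) :
    Disjoint (intBox ι (r - 1)) (signedAxisPoints ι r) := by
  rw [disjoint_left]
  intro x hbox haxis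
  obtain ⟨i, hi, -⟩ := mem_signedAxisPoints.1 haxis
  have hxi := abs_le.2 (mem_Icc.1 (Fintype.mem_piFinset.1 hbox i))
  rw [abs_of_pos (by omega : 0 < r)] at hi
  omega

lemma intLpBall_eq_intBox_union_signedAxisPoints {p : ℝ} {r : ℤ} (hp : 0 < p) (hr : 1 ≤ r)
    (hkey : Fintype.card ι * ((r : ℝ) - 1) ^ p ≤ (r : ℝ) ^ p) :
    intLpBall ι p r = ↑(intBox ι (r - 1) ∪ signedAxisPoints ι r) := by
  have hr0 : (0 : ℝ) ≤ r := by exact_mod_cast (by omega : 0 ≤ r)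
  ext x
  simp only [intLpBall, Set.mem_ofPred_eq, coe_union, Set.mem_union, mem_coe,
    mem_signedAxisPoints, abs_of_nonneg (by omega : 0 ≤ r)]
  constructor
  · intro hx
    by_cases hbox : ∀ i, |x i| ≤ r - 1
    · exact Or.inl (Fintype.mem_piFinset.2 fun i => mem_Icc.2 (abs_le.1 (hbox i)))
    simp only [not_forall, not_le] at hbox
    obtain ⟨i, hi⟩ := hbox
    obtain ⟨hxi, hzero⟩ := abs_eq_and_eq_zero_of_sum_abs_rpow_le hp hr0
      (i := i) (by exact_mod_cast (by omega : r ≤ |x i|)) hx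
    exact Or.inr ⟨i, by exact_mod_cast hxi, fun j hj => by exact_mod_cast hzero j hj⟩
  · rintro (hbox | ⟨i, hxi, hzero⟩)
    · refine le_trans (sum_abs_rpow_le_card_mul hp.le fun i => ?_) hkey
      exact_mod_cast abs_le.2 (mem_Icc.1 (Fintype.mem_piFinset.1 hbox i))
    · rw [Fintype.sum_eq_single i fun j hj => by simp [hzero j hj, zero_rpow hp.ne']]
      rw [show |(x i : ℝ)| = r by exact_mod_cast hxi]

end

theorem stmt1_general (n : ℕ) (r : ℤ) (p : ℝ) (hr : 1 ≤ r) (hp : 1 ≤ p)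
    (hpr : Real.log n / Real.log ((r : ℝ) / ((r : ℝ) - 1)) ≤ p) :
    (Set.ncard {x : Fin n → ℤ | ∑ i, |(x i : ℝ)| ^ p ≤ (r : ℝ) ^ p} : ℤ)
      = (2 * r - 1) ^ n + 2 * (n : ℤ) := by
  have hp0 : 0 < p := one_pos.trans_le hp
  have hkey := nat_mul_rpow_sub_one_le_rpow hp0 (by exact_mod_cast hr) hpr
  rw [← Fintype.card_fin n] at hkey
  change ((intLpBall (Fin n) p r).ncard : ℤ) = _
  rw [intLpBall_eq_intBox_union_signedAxisPoints hp0 hr hkey, Set.ncard_coe_finset,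
    card_union_of_disjoint (disjoint_intBox_signedAxisPoints hr), Nat.cast_add,
    card_intBox (by omega), card_signedAxisPoints (by omega), Fintype.card_fin]
  push_cast
  ring

/-- For `n ≥ 1`, integer `r ≥ 1` and `p ≥ ln n / ln (r/(r-1))`, the number of
points of `ℤⁿ` in the closed ℓp ball of radius `r` equals `(2r-1)ⁿ + 2n`. -/
theorem stmt1 (n : ℕ) (r : ℤ) (p : ℝ) (hn : 1 ≤ n) (hr : 1 ≤ r) (hp : 1 ≤ p)
    (hpr : Real.log n / Real.log ((r : ℝ) / ((r : ℝ) - 1)) ≤ p) :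
    (Set.ncard {x : Fin n → ℤ | ∑ i, |(x i : ℝ)| ^ p ≤ (r : ℝ) ^ p} : ℤ)
      = (2 * r - 1) ^ n + 2 * (n : ℤ) :=
  stmt1_general n r p hr hp hpr
end

section
/- Let r > 0 be non-integer, p ≥ 1, with p < ln(n)/ln(r/⌊r⌋) and (n-1)⌊r⌋^p + (⌊r⌋-1)^p ≤ r^p. Then the number of points of ℤⁿ in the closed ℓ_p ball of radius r equals (2⌊r⌋+1)ⁿ − 2ⁿ. -/
/-!
Write `k = ⌊r⌋`. A lattice point of the ℓp ball has every coordinate of modulus at most `k`,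
so the ball lies in the cube `[-k, k]ⁿ`. A corner of the cube has `∑ |xᵢ|^p = n k^p`, which exceeds
`r^p` precisely because `p < ln n / ln (r / k)`. Every other point of the cube has some coordinate
of modulus at most `k - 1`, so `∑ |xᵢ|^p ≤ (n - 1) k^p + (k - 1)^p ≤ r^p`. Hence the ball is the
cube minus its `2ⁿ` corners.
-/

open Finset

theorem Real.rpow_lt_mul_rpow_of_lt_log_div {a b p x : ℝ} (ha : 0 < a) (hab : a < b)
    (hx : 0 < x) (h : p < Real.log x / Real.log (b / a)) : b ^ p < x * a ^ p := by
  have hlog : 0 < Real.log (b / a) := Real.log_pos ((one_lt_div ha).mpr hab)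
  have hratio : (b / a) ^ p < x :=
    (Real.rpow_lt_iff_lt_log (div_pos (ha.trans hab) ha) hx).mpr ((lt_div_iff₀ hlog).mp h)
  rwa [Real.div_rpow (by linarith) ha.le, div_lt_iff₀ (by positivity)] at hratio

variable {ι : Type*} [Fintype ι]

theorem abs_le_floor_of_sum_abs_rpow_le {p r : ℝ} {x : ι → ℤ} (hp : 0 < p) (hr : 0 ≤ r)
    (h : ∑ i, |(x i : ℝ)| ^ p ≤ r ^ p) (i : ι) : |x i| ≤ ⌊r⌋ := by
  have hterm : |(x i : ℝ)| ^ p ≤ r ^ p :=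
    (single_le_sum (fun j _ => Real.rpow_nonneg (abs_nonneg (x j : ℝ)) p) (mem_univ i)).trans h
  rw [Int.le_floor, Int.cast_abs]
  exact (Real.rpow_le_rpow_iff (abs_nonneg _) hr hp).mp hterm

variable [DecidableEq ι]

variable (ι) in
noncomputable def intCube (k : ℤ) : Finset (ι → ℤ) := Fintype.piFinset fun _ => Icc (-k) k

variable (ι) in
def intCubeCorners (k : ℤ) : Finset (ι → ℤ) := Fintype.piFinset fun _ => {-k, k}

theorem mem_intCube {k : ℤ} {x : ι → ℤ} : x ∈ intCube ι k ↔ ∀ i, |x i| ≤ k := by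
  simp only [intCube, Fintype.mem_piFinset, mem_Icc, abs_le]

theorem mem_intCubeCorners {k : ℤ} (hk : 0 ≤ k) {x : ι → ℤ} :
    x ∈ intCubeCorners ι k ↔ ∀ i, |x i| = k := by
  simp only [intCubeCorners, Fintype.mem_piFinset, mem_insert, mem_singleton, abs_eq hk, or_comm]

theorem intCubeCorners_subset_intCube {k : ℤ} (hk : 0 ≤ k) : intCubeCorners ι k ⊆ intCube ι k :=
  fun _ hx => mem_intCube.mpr fun i => ((mem_intCubeCorners hk).mp hx i).le

theorem card_intCube {k : ℤ} (hk : 0 ≤ k) :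
    (#(intCube ι k) : ℤ) = (2 * k + 1) ^ Fintype.card ι := by
  rw [intCube, Fintype.card_piFinset, prod_const, card_univ, Nat.cast_pow, Int.card_Icc,
    Int.toNat_of_nonneg (by omega)]
  ring

theorem card_intCubeCorners {k : ℤ} (hk : k ≠ 0) :
    #(intCubeCorners ι k) = 2 ^ Fintype.card ι := by
  rw [intCubeCorners, Fintype.card_piFinset, prod_const, card_univ,
    card_pair (by omega : -k ≠ k)]

theorem card_intCube_sdiff_intCubeCorners {k : ℤ} (hk : 0 < k) :
    (#(intCube ι k \ intCubeCorners ι k) : ℤ) =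
      (2 * k + 1) ^ Fintype.card ι - 2 ^ Fintype.card ι := by
  rw [card_sdiff_of_subset (intCubeCorners_subset_intCube hk.le),
    Nat.cast_sub (card_le_card (intCubeCorners_subset_intCube hk.le)), card_intCube hk.le,
    card_intCubeCorners hk.ne', Nat.cast_pow, Nat.cast_ofNat]

section SumAbsRpow

variable {p r : ℝ} {x : ι → ℤ}

theorem sum_abs_rpow_of_mem_intCubeCorners {k : ℤ} (hk : 0 ≤ k) (hx : x ∈ intCubeCorners ι k) :
    ∑ i, |(x i : ℝ)| ^ p = Fintype.card ι * (k : ℝ) ^ p := by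
  simp only [← Int.cast_abs, (mem_intCubeCorners hk).mp hx, sum_const, card_univ, nsmul_eq_mul]

theorem sum_abs_rpow_le_of_abs_le {k : ℤ} (hp : 0 ≤ p) (hx : ∀ i, |x i| ≤ k) {j : ι}
    (hj : |x j| ≤ k - 1) :
    ∑ i, |(x i : ℝ)| ^ p ≤ (Fintype.card ι - 1) * (k : ℝ) ^ p + ((k : ℝ) - 1) ^ p := by
  have hbound : ∀ i, |(x i : ℝ)| ^ p ≤ (k : ℝ) ^ p := fun i =>
    Real.rpow_le_rpow (abs_nonneg _) (by exact_mod_cast hx i) hp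
  have hrest : ∑ i ∈ univ.erase j, |(x i : ℝ)| ^ p ≤ (Fintype.card ι - 1) * (k : ℝ) ^ p := by
    have := sum_le_card_nsmul _ _ _ fun i (_ : i ∈ univ.erase j) => hbound i
    rwa [card_erase_of_mem (mem_univ j), card_univ, nsmul_eq_mul,
      Nat.cast_pred (Fintype.card_pos_iff.mpr ⟨j⟩)] at this
  have hj' : |(x j : ℝ)| ^ p ≤ ((k : ℝ) - 1) ^ p :=
    Real.rpow_le_rpow (abs_nonneg _) (by exact_mod_cast hj) hp
  rw [← add_sum_erase _ _ (mem_univ j)]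
  linarith

theorem setOf_sum_abs_rpow_le_eq_intCube_sdiff_intCubeCorners (hp : 0 < p) (hr : 0 ≤ r)
    (hcorner_out : r ^ p < Fintype.card ι * (⌊r⌋ : ℝ) ^ p)
    (hcorner_in : (Fintype.card ι - 1) * (⌊r⌋ : ℝ) ^ p + ((⌊r⌋ : ℝ) - 1) ^ p ≤ r ^ p) :
    {x : ι → ℤ | ∑ i, |(x i : ℝ)| ^ p ≤ r ^ p} = ↑(intCube ι ⌊r⌋ \ intCubeCorners ι ⌊r⌋) := by
  have hk : 0 ≤ ⌊r⌋ := Int.floor_nonneg.mpr hr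
  ext x
  rw [Set.mem_ofPred_eq, coe_sdiff, Set.mem_sdiff, mem_coe, mem_coe, mem_intCube]
  constructor
  · intro hx
    refine ⟨abs_le_floor_of_sum_abs_rpow_le hp hr hx, fun hcorner => ?_⟩
    rw [sum_abs_rpow_of_mem_intCubeCorners hk hcorner] at hx
    linarith
  · rintro ⟨hcube, hnot_corner⟩
    obtain ⟨j, hj⟩ : ∃ j, |x j| ≠ ⌊r⌋ := by
      by_contra! h
      exact hnot_corner ((mem_intCubeCorners hk).mpr h)
    have hj' : |x j| ≤ ⌊r⌋ - 1 := by have := hcube j; omega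
    exact (sum_abs_rpow_le_of_abs_le hp.le hcube hj').trans hcorner_in

end SumAbsRpow

/-- For non-integer `r > 0` and real `p ≥ 1` with `p < ln n / ln (r/⌊r⌋)` and
`(n-1)⌊r⌋^p + (⌊r⌋-1)^p ≤ r^p`, the number of points of `ℤⁿ` in the closed ℓp
ball of radius `r` equals `(2⌊r⌋+1)ⁿ - 2ⁿ`. -/
theorem stmt3 (n : ℕ) (r : ℝ) (p : ℝ) (hn : 1 ≤ n) (hr : 0 < r)
    (hri : ∀ m : ℤ, (m : ℝ) ≠ r) (hp : 1 ≤ p)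
    (hpr : p < Real.log n / Real.log (r / (⌊r⌋ : ℝ)))
    (hcorner : ((n : ℝ) - 1) * ((⌊r⌋ : ℝ)) ^ p + ((⌊r⌋ : ℝ) - 1) ^ p ≤ r ^ p) :
    (Set.ncard {x : Fin n → ℤ | ∑ i, |(x i : ℝ)| ^ p ≤ r ^ p} : ℤ)
      = (2 * ⌊r⌋ + 1) ^ n - 2 ^ n := by
  have hp0 : 0 < p := by linarith
  have hk : 0 < ⌊r⌋ := by
    refine (Int.floor_nonneg.mpr hr.le).lt_of_ne fun h0 => ?_
    -- for `⌊r⌋ = 0`, division by zero turns `hpr` into `p < 0`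
    rw [← h0, Int.cast_zero, div_zero, Real.log_zero, div_zero] at hpr
    linarith
  have hkr : (⌊r⌋ : ℝ) < r := (Int.floor_le r).lt_of_ne (hri ⌊r⌋)
  have hcorner_out : r ^ p < n * (⌊r⌋ : ℝ) ^ p :=
    Real.rpow_lt_mul_rpow_of_lt_log_div (by exact_mod_cast hk) hkr (by exact_mod_cast hn) hpr
  rw [setOf_sum_abs_rpow_le_eq_intCube_sdiff_intCubeCorners hp0 hr.le
      (by rwa [Fintype.card_fin]) (by rwa [Fintype.card_fin]),
    Set.ncard_coe_finset, card_intCube_sdiff_intCubeCorners hk, Fintype.card_fin]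
end

section
/- For integer r ≥ 2 and integer p with 2(r−1)^p ≤ r^p, the lattice Λ_r ⊂ ℤ² generated by (r, 2r−1) and (2r, −1) has determinant 4r² − r, and the translates of B_p²(r) ∩ ℤ² by Λ_r are pairwise disjoint; hence its discrete packing density is ((2r−1)² + 4)/(4r² − r). -/
/-!
A point of the ball is either in the square `[-(r-1), r-1]²` or one of the four tips
`(± r, 0)`, `(0, ± r)`: a coordinate of absolute value `r` forces the other one to vanish, and
`2 (r-1)^p ≤ r^p` puts the whole square inside the ball.

The vector `a (r, 2r-1) + b (2r, -1)` is `(r s, v)` with `s = a + 2b` and `2v + s = (4r-1) a`.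
A difference of two ball points has both coordinates in `[-2r, 2r]`, so `|s| ≤ 2` and `|a| ≤ 1`;
in each of the fifteen remaining linear cases the shape of the ball leaves only the zero vector.
-/

open Finset

section Ball

variable {r : ℤ} {p : ℕ}

lemma eq_zero_of_abs_pow_add_abs_pow_le {x y : ℤ} (hp : p ≠ 0) (hx : |x| = r)
    (h : |x| ^ p + |y| ^ p ≤ r ^ p) : y = 0 := by
  have hy : |y| ^ p = 0 := le_antisymm (by rw [hx] at h; linarith) (by positivity)
  exact abs_eq_zero.1 (pow_eq_zero_iff hp |>.1 hy)

lemma abs_pow_add_abs_pow_le_pow_iff (hr : 0 ≤ r) (h2 : 2 * (r - 1) ^ p ≤ r ^ p) {x y : ℤ} :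
    |x| ^ p + |y| ^ p ≤ r ^ p ↔
      (|x| ≤ r - 1 ∧ |y| ≤ r - 1) ∨ (|x| = r ∧ y = 0) ∨ (x = 0 ∧ |y| = r) := by
  have hp : p ≠ 0 := by rintro rfl; norm_num at h2
  constructor
  · intro h
    have hx : |x| ≤ r := (pow_le_pow_iff_left₀ (abs_nonneg x) hr hp).1
      (by linarith [pow_nonneg (abs_nonneg y) p])
    have hy : |y| ≤ r := (pow_le_pow_iff_left₀ (abs_nonneg y) hr hp).1
      (by linarith [pow_nonneg (abs_nonneg x) p])
    rcases hx.eq_or_lt with hx | hx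
    · exact .inr (.inl ⟨hx, eq_zero_of_abs_pow_add_abs_pow_le hp hx h⟩)
    rcases hy.eq_or_lt with hy | hy
    · exact .inr (.inr ⟨eq_zero_of_abs_pow_add_abs_pow_le hp hy (by linarith), hy⟩)
    exact .inl ⟨by omega, by omega⟩
  · rintro (⟨hx, hy⟩ | ⟨hx, rfl⟩ | ⟨rfl, hy⟩)
    · have := pow_le_pow_left₀ (abs_nonneg x) hx p
      have := pow_le_pow_left₀ (abs_nonneg y) hy p
      linarith
    · simp [hx, hp]
    · simp [hy, hp]

noncomputable def squareWithTips (r : ℤ) : Finset (ℤ × ℤ) :=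
  Icc (-(r - 1)) (r - 1) ×ˢ Icc (-(r - 1)) (r - 1) ∪ {(r, 0), (-r, 0), (0, r), (0, -r)}

lemma mem_squareWithTips {x y : ℤ} (hr : 0 ≤ r) :
    (x, y) ∈ squareWithTips r ↔
      (|x| ≤ r - 1 ∧ |y| ≤ r - 1) ∨ (|x| = r ∧ y = 0) ∨ (x = 0 ∧ |y| = r) := by
  simp only [squareWithTips, mem_union, mem_product, mem_Icc, mem_insert, mem_singleton,
    Prod.mk.injEq, abs_le, abs_eq hr]
  tauto

lemma card_squareWithTips (hr : 1 ≤ r) :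
    ((squareWithTips r).card : ℤ) = (2 * r - 1) ^ 2 + 4 := by
  have htips : ({(r, 0), (-r, 0), (0, r), (0, -r)} : Finset (ℤ × ℤ)).card = 4 := by
    rw [card_insert_of_notMem, card_insert_of_notMem, card_insert_of_notMem, card_singleton] <;>
      simp [Prod.ext_iff] <;> omega
  have hdisj : Disjoint (Icc (-(r - 1)) (r - 1) ×ˢ Icc (-(r - 1)) (r - 1))
      ({(r, 0), (-r, 0), (0, r), (0, -r)} : Finset (ℤ × ℤ)) := by
    simp [disjoint_right]
  rw [squareWithTips, card_union_of_disjoint hdisj, card_product, Int.card_Icc, htips]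
  push_cast [Int.toNat_of_nonneg (by omega : (0 : ℤ) ≤ r - 1 + 1 - -(r - 1))]
  ring

lemma ncard_lpBall (hr : 1 ≤ r) (h2 : 2 * (r - 1) ^ p ≤ r ^ p) :
    (Set.ncard {x : Fin 2 → ℤ | |x 0| ^ p + |x 1| ^ p ≤ r ^ p} : ℤ) = (2 * r - 1) ^ 2 + 4 := by
  have hball : {x : Fin 2 → ℤ | |x 0| ^ p + |x 1| ^ p ≤ r ^ p} =
      ↑((squareWithTips r).map (finTwoArrowEquiv ℤ).symm.toEmbedding) := by
    ext x
    rw [mem_coe, mem_map_equiv, Equiv.symm_symm]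
    exact (abs_pow_add_abs_pow_le_pow_iff (by omega) h2).trans (mem_squareWithTips (by omega)).symm
  rw [hball, Set.ncard_coe_finset, card_map, card_squareWithTips hr]

end Ball

lemma lattice_vector_coords (r a b : ℤ) :
    (a • ![r, 2 * r - 1] + b • ![2 * r, -1]) 0 = r * (a + 2 * b) ∧
      2 * (a • ![r, 2 * r - 1] + b • ![2 * r, -1]) 1 + (a + 2 * b) = (4 * r - 1) * a := by
  simp only [Pi.add_apply, Pi.smul_apply, Matrix.cons_val_zero, Matrix.cons_val_one, smul_eq_mul]
  constructor <;> ring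

lemma eq_of_sub_mem_lattice {r x₁ y₁ x₂ y₂ s a : ℤ} (hr : 2 ≤ r)
    (h₁ : (|x₁| ≤ r - 1 ∧ |y₁| ≤ r - 1) ∨ (|x₁| = r ∧ y₁ = 0) ∨ (x₁ = 0 ∧ |y₁| = r))
    (h₂ : (|x₂| ≤ r - 1 ∧ |y₂| ≤ r - 1) ∨ (|x₂| = r ∧ y₂ = 0) ∨ (x₂ = 0 ∧ |y₂| = r))
    (hs : x₁ - x₂ = r * s) (ha : 2 * (y₁ - y₂) + s = (4 * r - 1) * a) :
    x₁ = x₂ ∧ y₁ = y₂ := by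
  simp only [abs_le, abs_eq (by omega : (0 : ℤ) ≤ r)] at h₁ h₂
  have hx : |x₁ - x₂| ≤ 2 * r := abs_le.2 (by omega)
  have hy : |y₁ - y₂| ≤ 2 * r := abs_le.2 (by omega)
  obtain ⟨hs₁, hs₂⟩ : -2 ≤ s ∧ s ≤ 2 := by
    rw [hs, abs_le] at hx; constructor <;> nlinarith
  obtain ⟨ha₁, ha₂⟩ : -1 ≤ a ∧ a ≤ 1 := by
    rw [abs_le] at hy; constructor <;> nlinarith
  interval_cases s <;> interval_cases a <;> omega

lemma lattice_translates_disjoint {r : ℤ} {p : ℕ} (hr : 2 ≤ r) (h2 : 2 * (r - 1) ^ p ≤ r ^ p) :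
    ∀ c₁ ∈ {c : Fin 2 → ℤ | ∃ a b : ℤ, c = a • ![r, 2 * r - 1] + b • ![2 * r, -1]},
    ∀ c₂ ∈ {c : Fin 2 → ℤ | ∃ a b : ℤ, c = a • ![r, 2 * r - 1] + b • ![2 * r, -1]},
      c₁ ≠ c₂ → ∀ z : Fin 2 → ℤ,
        ¬ (|z 0 - c₁ 0| ^ p + |z 1 - c₁ 1| ^ p ≤ r ^ p ∧
           |z 0 - c₂ 0| ^ p + |z 1 - c₂ 1| ^ p ≤ r ^ p) := by
  rintro c₁ ⟨a₁, b₁, rfl⟩ c₂ ⟨a₂, b₂, rfl⟩ hne z ⟨hz₁, hz₂⟩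
  obtain ⟨hx₁, hy₁⟩ := lattice_vector_coords r a₁ b₁
  obtain ⟨hx₂, hy₂⟩ := lattice_vector_coords r a₂ b₂
  obtain ⟨h0, h1⟩ := eq_of_sub_mem_lattice hr
    ((abs_pow_add_abs_pow_le_pow_iff (by omega) h2).1 hz₁)
    ((abs_pow_add_abs_pow_le_pow_iff (by omega) h2).1 hz₂)
    (s := a₂ + 2 * b₂ - (a₁ + 2 * b₁)) (a := a₂ - a₁)
    (by linear_combination hx₂ - hx₁) (by linear_combination hy₂ - hy₁)
  exact hne (funext fun i => by fin_cases i <;> simp only [Fin.zero_eta, Fin.mk_one] <;> omega)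

theorem stmt11_general (r : ℤ) (p : ℕ) (hr : 2 ≤ r)
    (h2 : 2 * (r - 1) ^ p ≤ r ^ p) :
    |Matrix.det !![r, 2 * r - 1; 2 * r, -1]| = 4 * r ^ 2 - r ∧
    (∀ c₁ ∈ {c : Fin 2 → ℤ | ∃ a b : ℤ, c = a • ![r, 2 * r - 1] + b • ![2 * r, -1]},
     ∀ c₂ ∈ {c : Fin 2 → ℤ | ∃ a b : ℤ, c = a • ![r, 2 * r - 1] + b • ![2 * r, -1]},
      c₁ ≠ c₂ → ∀ z : Fin 2 → ℤ,
        ¬ (|z 0 - c₁ 0| ^ p + |z 1 - c₁ 1| ^ p ≤ r ^ p ∧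
           |z 0 - c₂ 0| ^ p + |z 1 - c₂ 1| ^ p ≤ r ^ p)) ∧
    (Set.ncard {x : Fin 2 → ℤ | |x 0| ^ p + |x 1| ^ p ≤ r ^ p} : ℤ)
      = (2 * r - 1) ^ 2 + 4 ∧
    (Set.ncard {x : Fin 2 → ℤ | |x 0| ^ p + |x 1| ^ p ≤ r ^ p} : ℝ) /
        (4 * (r : ℝ) ^ 2 - r)
      = ((2 * (r : ℝ) - 1) ^ 2 + 4) / (4 * (r : ℝ) ^ 2 - r) := by
  have hcard := ncard_lpBall (by omega) h2
  refine ⟨?_, lattice_translates_disjoint hr h2, hcard, ?_⟩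
  · rw [Matrix.det_fin_two_of, abs_of_nonpos (by nlinarith)]
    ring
  · rw [show (Set.ncard {x : Fin 2 → ℤ | |x 0| ^ p + |x 1| ^ p ≤ r ^ p} : ℝ) =
      (2 * (r : ℝ) - 1) ^ 2 + 4 by exact_mod_cast hcard]

/-- For integer `r ≥ 2` and integer `p` with `2(r-1)^p ≤ r^p`, the lattice
generated by `(r, 2r-1)` and `(2r, -1)` has determinant `4r² - r`, the
translates of `B_p²(r) ∩ ℤ²` by the lattice are pairwise disjoint, and the
discrete packing density is `((2r-1)² + 4)/(4r² - r)`. -/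
theorem stmt11 (r : ℤ) (p : ℕ) (hr : 2 ≤ r) (hp : 1 ≤ p)
    (h2 : 2 * (r - 1) ^ p ≤ r ^ p) :
    |Matrix.det !![r, 2 * r - 1; 2 * r, -1]| = 4 * r ^ 2 - r ∧
    (∀ c₁ ∈ {c : Fin 2 → ℤ | ∃ a b : ℤ, c = a • ![r, 2 * r - 1] + b • ![2 * r, -1]},
     ∀ c₂ ∈ {c : Fin 2 → ℤ | ∃ a b : ℤ, c = a • ![r, 2 * r - 1] + b • ![2 * r, -1]},
      c₁ ≠ c₂ → ∀ z : Fin 2 → ℤ,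
        ¬ (|z 0 - c₁ 0| ^ p + |z 1 - c₁ 1| ^ p ≤ r ^ p ∧
           |z 0 - c₂ 0| ^ p + |z 1 - c₂ 1| ^ p ≤ r ^ p)) ∧
    (Set.ncard {x : Fin 2 → ℤ | |x 0| ^ p + |x 1| ^ p ≤ r ^ p} : ℤ)
      = (2 * r - 1) ^ 2 + 4 ∧
    (Set.ncard {x : Fin 2 → ℤ | |x 0| ^ p + |x 1| ^ p ≤ r ^ p} : ℝ) /
        (4 * (r : ℝ) ^ 2 - r)
      = ((2 * (r : ℝ) - 1) ^ 2 + 4) / (4 * (r : ℝ) ^ 2 - r) :=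
  stmt11_general r p hr h2
end

section
/- Let r ≥ 3 be an integer and p ≥ 2 a real with 2(r−1)^p ≤ r^p. Then (r+1)^p ≥ r^p + (r−2)^p, and consequently the chain r^p < r^p+1 < r^p+2^p < ⋯ < r^p+(r−2)^p < (r+1)^p holds, so the distance set contains at least r−2 values strictly between r and r+1 of the form (r^p + k^p)^{1/p}, k = 1,…,r−2. -/
/-!
Convexity of `t ↦ t ^ p` for `p ≥ 1` gives `2 r^p ≤ (r-1)^p + (r+1)^p`; combined with
`2 (r-1)^p ≤ r^p` this yields `r^p + (r-1)^p ≤ (r+1)^p`, and every `k^p` with `0 ≤ k ≤ r - 2`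
is strictly smaller than `(r-1)^p`.
-/

namespace Real

theorem two_mul_rpow_le_rpow_sub_add_rpow_add {a h p : ℝ} (hp : 1 ≤ p)
    (hsub : 0 ≤ a - h) (hadd : 0 ≤ a + h) :
    2 * a ^ p ≤ (a - h) ^ p + (a + h) ^ p := by
  have hmid := (convexOn_rpow hp).2 (Set.mem_Ici.2 hsub) (Set.mem_Ici.2 hadd)
    (by norm_num : (0 : ℝ) ≤ 1 / 2) (by norm_num : (0 : ℝ) ≤ 1 / 2) (by norm_num)
  have hcenter : (1 / 2 : ℝ) • (a - h) + (1 / 2 : ℝ) • (a + h) = a := by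
    simp only [smul_eq_mul]; ring
  rw [hcenter] at hmid
  simp only [smul_eq_mul] at hmid
  linarith

theorem rpow_add_rpow_lt_rpow_add_one {x y p : ℝ} (hp : 1 ≤ p) (hy : 0 ≤ y) (hyx : y < x - 1)
    (h2 : 2 * (x - 1) ^ p ≤ x ^ p) :
    x ^ p + y ^ p < (x + 1) ^ p := by
  have hconv : 2 * x ^ p ≤ (x - 1) ^ p + (x + 1) ^ p :=
    two_mul_rpow_le_rpow_sub_add_rpow_add hp (by linarith) (by linarith)
  have hlt : y ^ p < (x - 1) ^ p := rpow_lt_rpow hy hyx (by linarith)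
  linarith

end Real

/-- For integer `r ≥ 3` and real `p ≥ 2` with `2(r-1)^p ≤ r^p`, one has
`(r+1)^p ≥ r^p + (r-2)^p`; consequently the values `r^p + k^p`, `k = 1,…,r-2`,
lie strictly between `r^p` and `(r+1)^p`, so the distance set contains at least
`r-2` values `(r^p + k^p)^(1/p)` strictly between `r` and `r+1`. -/
theorem stmt13 (r : ℤ) (p : ℝ) (hr : 3 ≤ r) (hp : 2 ≤ p)
    (h2 : 2 * ((r : ℝ) - 1) ^ p ≤ (r : ℝ) ^ p) :
    ((r : ℝ) + 1) ^ p ≥ (r : ℝ) ^ p + ((r : ℝ) - 2) ^ p ∧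
    (∀ k : ℤ, 1 ≤ k → k ≤ r - 2 →
      (r : ℝ) ^ p < (r : ℝ) ^ p + (k : ℝ) ^ p ∧
      (r : ℝ) ^ p + (k : ℝ) ^ p < ((r : ℝ) + 1) ^ p) ∧
    (∀ k : ℤ, 1 ≤ k → k ≤ r - 2 →
      (r : ℝ) < ((r : ℝ) ^ p + (k : ℝ) ^ p) ^ (1 / p) ∧
      ((r : ℝ) ^ p + (k : ℝ) ^ p) ^ (1 / p) < (r : ℝ) + 1) := by
  have hr' : (3 : ℝ) ≤ r := by exact_mod_cast hr
  have hp0 : 0 < p := by linarith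
  have upper (y : ℝ) (hy : 0 ≤ y) (hyr : y ≤ r - 2) :
      (r : ℝ) ^ p + y ^ p < ((r : ℝ) + 1) ^ p :=
    Real.rpow_add_rpow_lt_rpow_add_one (by linarith) hy (by linarith) h2
  have bounds (k : ℤ) (hk1 : 1 ≤ k) (hk2 : k ≤ r - 2) :
      (r : ℝ) ^ p < (r : ℝ) ^ p + (k : ℝ) ^ p ∧
        (r : ℝ) ^ p + (k : ℝ) ^ p < ((r : ℝ) + 1) ^ p := by
    have hk1' : (1 : ℝ) ≤ k := by exact_mod_cast hk1
    have hk2' : (k : ℝ) ≤ r - 2 := by exact_mod_cast hk2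
    exact ⟨lt_add_of_pos_right _ (Real.rpow_pos_of_pos (by linarith) p),
      upper k (by linarith) hk2'⟩
  refine ⟨(upper _ (by linarith) le_rfl).le, bounds, fun k hk1 hk2 => ?_⟩
  obtain ⟨lo, hi⟩ := bounds k hk1 hk2
  have hsum : (0 : ℝ) ≤ (r : ℝ) ^ p + (k : ℝ) ^ p :=
    (Real.rpow_nonneg (by linarith) p).trans lo.le
  rw [one_div]
  exact ⟨(Real.lt_rpow_inv_iff_of_pos (by linarith) hsum hp0).2 lo,
    (Real.rpow_inv_lt_iff_of_pos hsum (by linarith) hp0).2 hi⟩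
end

section
/- Let r ≥ 2 be an integer and p ≥ 1 with 2(r−1)^p > r^p and (r−1)^p + (r−2)^p ≤ r^p. Then the lattice in ℤ² generated by (r−1, 2r−1) and (2r, −1) has determinant 4r² − r − 1, and under these hypotheses the ℓ_p ball of radius r in ℤ² contains exactly (2r−1)² points, so the discrete packing density is (2r−1)²/(4r²−r−1). -/
/-!
Since `t ↦ t ^ p` is strictly increasing on `[0, ∞)`, a lattice point `(a, b)` lies in the
`ℓ_p` ball of radius `r` exactly when `|a|, |b| ≤ r - 1` and not both equal `r - 1` (these are
excluded by `2 (r-1)^p > r^p` and all others included by `(r-1)^p + (r-2)^p ≤ r^p`), or it is one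
of the four points `±r e_i`. So the ball is the square `[-(r-1), r-1]²` with its four corners
traded for the four axis points, and has `(2r-1)²` points.
-/

open Finset

noncomputable def intSquare (k : ℤ) : Finset (Fin 2 → ℤ) :=
  Fintype.piFinset fun _ => Finset.Icc (-k) k

def squareCorners (k : ℤ) : Finset (Fin 2 → ℤ) := {![k, k], ![k, -k], ![-k, k], ![-k, -k]}

def axisPoints (k : ℤ) : Finset (Fin 2 → ℤ) := {![k, 0], ![-k, 0], ![0, k], ![0, -k]}

section LatticeSquare

variable {k : ℤ} {x : Fin 2 → ℤ}

lemma mem_intSquare : x ∈ intSquare k ↔ |x 0| ≤ k ∧ |x 1| ≤ k := by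
  simp [intSquare, Fin.forall_fin_two, abs_le]

lemma mem_squareCorners (hk : 0 ≤ k) : x ∈ squareCorners k ↔ |x 0| = k ∧ |x 1| = k := by
  simp [squareCorners, funext_iff, Fin.forall_fin_two, abs_eq hk]
  tauto

lemma mem_axisPoints (hk : 0 ≤ k) :
    x ∈ axisPoints k ↔ (|x 0| = k ∧ x 1 = 0) ∨ (x 0 = 0 ∧ |x 1| = k) := by
  simp [axisPoints, funext_iff, Fin.forall_fin_two, abs_eq hk]
  tauto

lemma card_intSquare (hk : 0 ≤ k) : ((intSquare k).card : ℤ) = (2 * k + 1) ^ 2 := by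
  rw [intSquare, Fintype.card_piFinset, prod_const, Int.card_Icc, card_fin]
  push_cast
  rw [Int.toNat_of_nonneg (by omega)]
  ring

lemma card_squareCorners (hk : k ≠ 0) : (squareCorners k).card = 4 := by
  rw [squareCorners, card_eq_four]
  refine ⟨![k, k], ![k, -k], ![-k, k], ![-k, -k], ?_⟩
  simp [funext_iff, Fin.forall_fin_two]
  omega

lemma card_axisPoints (hk : k ≠ 0) : (axisPoints k).card = 4 := by
  rw [axisPoints, card_eq_four]
  refine ⟨![k, 0], ![-k, 0], ![0, k], ![0, -k], ?_⟩
  simp [funext_iff, Fin.forall_fin_two]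
  omega

lemma squareCorners_subset_intSquare (hk : 0 ≤ k) : squareCorners k ⊆ intSquare k := by
  intro x hx
  rw [mem_squareCorners hk] at hx
  rw [mem_intSquare]
  omega

lemma disjoint_intSquare_axisPoints (hk : 0 ≤ k) :
    Disjoint (intSquare (k - 1)) (axisPoints k) := by
  rw [disjoint_right]
  intro x hx
  rw [mem_axisPoints hk] at hx
  rw [mem_intSquare]
  omega

lemma card_intSquare_sdiff_squareCorners_union_axisPoints (hk : 2 ≤ k) :
    ((intSquare (k - 1) \ squareCorners (k - 1) ∪ axisPoints k).card : ℤ) = (2 * k - 1) ^ 2 := by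
  have hdisj : Disjoint (intSquare (k - 1) \ squareCorners (k - 1)) (axisPoints k) :=
    (disjoint_intSquare_axisPoints (by omega)).mono_left sdiff_subset
  rw [card_union_of_disjoint hdisj,
    card_sdiff_of_subset (squareCorners_subset_intSquare (by omega)),
    card_squareCorners (by omega), card_axisPoints (by omega)]
  have hsquare := card_intSquare (k := k - 1) (by omega)
  have h4 : 4 ≤ (intSquare (k - 1)).card := by
    have := card_le_card (squareCorners_subset_intSquare (k := k - 1) (by omega))
    rwa [card_squareCorners (by omega)] at this
  rw [Nat.sub_add_cancel h4, hsquare]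
  ring

end LatticeSquare

section LpBall

variable {p : ℝ} (hp : 0 < p)
include hp

lemma intCast_rpow_le_intCast_rpow_iff {u v : ℤ} (hu : 0 ≤ u) (hv : 0 ≤ v) :
    (u : ℝ) ^ p ≤ (v : ℝ) ^ p ↔ u ≤ v := by
  rw [Real.rpow_le_rpow_iff (by exact_mod_cast hu) (by exact_mod_cast hv) hp, Int.cast_le]

lemma rpow_add_rpow_le_rpow_iff {r u v : ℤ} (hr : 2 ≤ r) (hu : 0 ≤ u) (hv : 0 ≤ v)
    (h1 : (r : ℝ) ^ p < 2 * ((r : ℝ) - 1) ^ p)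
    (h2 : ((r : ℝ) - 1) ^ p + ((r : ℝ) - 2) ^ p ≤ (r : ℝ) ^ p) :
    (u : ℝ) ^ p + (v : ℝ) ^ p ≤ (r : ℝ) ^ p ↔
      (u ≤ r - 1 ∧ v ≤ r - 1 ∧ ¬(u = r - 1 ∧ v = r - 1)) ∨ (u = r ∧ v = 0) ∨ (u = 0 ∧ v = r) := by
  have le_iff := fun {s t : ℤ} (hs : 0 ≤ s) (ht : 0 ≤ t) =>
    intCast_rpow_le_intCast_rpow_iff hp hs ht
  have zero_rpow : (0 : ℝ) ^ p = 0 := Real.zero_rpow hp.ne'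
  constructor
  · intro h
    have hu_nn : 0 ≤ (u : ℝ) ^ p := by positivity
    have hv_nn : 0 ≤ (v : ℝ) ^ p := by positivity
    have hur : u ≤ r := (le_iff hu (by omega)).1 (by linarith)
    have hvr : v ≤ r := (le_iff hv (by omega)).1 (by linarith)
    have hv_zero : u = r → v ≤ 0 := by
      rintro rfl
      exact (le_iff hv le_rfl).1 (by rw [Int.cast_zero, zero_rpow]; linarith)
    have hu_zero : v = r → u ≤ 0 := by
      rintro rfl
      exact (le_iff hu le_rfl).1 (by rw [Int.cast_zero, zero_rpow]; linarith)
    have hcorner : ¬(u = r - 1 ∧ v = r - 1) := by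
      rintro ⟨rfl, rfl⟩
      push_cast at h
      linarith
    omega
  · have near_corner : ∀ s t : ℤ, 0 ≤ s → 0 ≤ t → s ≤ r - 1 → t ≤ r - 2 →
        (s : ℝ) ^ p + (t : ℝ) ^ p ≤ (r : ℝ) ^ p := by
      intro s t hs ht hs1 ht2
      have hs' := (le_iff hs (by omega)).2 hs1
      have ht' := (le_iff ht (by omega)).2 ht2
      push_cast at hs' ht'
      linarith
    rintro (⟨hu1, hv1, hcorner⟩ | ⟨rfl, rfl⟩ | ⟨rfl, rfl⟩)
    · rcases (by omega : v ≤ r - 2 ∨ u ≤ r - 2) with hv2 | hu2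
      · exact near_corner u v hu hv hu1 hv2
      · linarith [near_corner v u hv hu hv1 hu2]
    · simp [zero_rpow]
    · simp [zero_rpow]

lemma setOf_abs_rpow_add_abs_rpow_le_rpow_eq {r : ℤ} (hr : 2 ≤ r)
    (h1 : (r : ℝ) ^ p < 2 * ((r : ℝ) - 1) ^ p)
    (h2 : ((r : ℝ) - 1) ^ p + ((r : ℝ) - 2) ^ p ≤ (r : ℝ) ^ p) :
    {x : Fin 2 → ℤ | |(x 0 : ℝ)| ^ p + |(x 1 : ℝ)| ^ p ≤ (r : ℝ) ^ p} =
      ↑(intSquare (r - 1) \ squareCorners (r - 1) ∪ axisPoints r) := by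
  ext x
  simp only [Set.mem_ofPred_eq, coe_union, coe_sdiff, Set.mem_union, Set.mem_sdiff, mem_coe,
    mem_intSquare, mem_squareCorners (by omega : 0 ≤ r - 1), mem_axisPoints (by omega : 0 ≤ r)]
  rw [← Int.cast_abs, ← Int.cast_abs,
    rpow_add_rpow_le_rpow_iff hp hr (abs_nonneg _) (abs_nonneg _) h1 h2, abs_eq_zero, abs_eq_zero]
  tauto

end LpBall

/-- For integer `r ≥ 2` and real `p ≥ 1` with `2(r-1)^p > r^p` and
`(r-1)^p + (r-2)^p ≤ r^p`, the lattice generated by `(r-1, 2r-1)` and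
`(2r, -1)` has determinant `4r² - r - 1`, and the ℓp ball of radius `r` in
`ℤ²` contains exactly `(2r-1)²` points, so the discrete packing density is
`(2r-1)²/(4r² - r - 1)`. -/
theorem stmt14 (r : ℤ) (p : ℝ) (hr : 2 ≤ r) (hp : 1 ≤ p)
    (h1 : (r : ℝ) ^ p < 2 * ((r : ℝ) - 1) ^ p)
    (h2 : ((r : ℝ) - 1) ^ p + ((r : ℝ) - 2) ^ p ≤ (r : ℝ) ^ p) :
    |Matrix.det !![r - 1, 2 * r - 1; 2 * r, -1]| = 4 * r ^ 2 - r - 1 ∧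
    (Set.ncard {x : Fin 2 → ℤ | |(x 0 : ℝ)| ^ p + |(x 1 : ℝ)| ^ p ≤ (r : ℝ) ^ p} : ℤ)
      = (2 * r - 1) ^ 2 ∧
    (Set.ncard {x : Fin 2 → ℤ | |(x 0 : ℝ)| ^ p + |(x 1 : ℝ)| ^ p ≤ (r : ℝ) ^ p} : ℝ) /
        (4 * (r : ℝ) ^ 2 - r - 1)
      = (2 * (r : ℝ) - 1) ^ 2 / (4 * (r : ℝ) ^ 2 - r - 1) := by
  have hcard : (Set.ncard {x : Fin 2 → ℤ | |(x 0 : ℝ)| ^ p + |(x 1 : ℝ)| ^ p ≤ (r : ℝ) ^ p} : ℤ)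
      = (2 * r - 1) ^ 2 := by
    rw [setOf_abs_rpow_add_abs_rpow_le_rpow_eq (by linarith) hr h1 h2, Set.ncard_coe_finset]
    exact card_intSquare_sdiff_squareCorners_union_axisPoints hr
  refine ⟨?_, hcard, ?_⟩
  · rw [Matrix.det_fin_two_of, abs_of_nonpos (by nlinarith)]
    ring
  · congr 1
    exact_mod_cast hcard
end

section
/- The lattice Λ ⊂ ℤ² generated by (1,5) and (0,24) is quasi-perfect in the ℓ_2 metric: its integer packing radius is √5 (i.e., packing radius squared 5), its integer covering radius is √8, and √8 is the immediate successor of √5 in the set of realizable squared distances {x² + y² : x,y ∈ ℤ}. -/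
/-!
The lattice is `Λ = {(x, y) : y ≡ 5x [ZMOD 24]}`, a sublattice of index 24. Its shortest nonzero
vectors, such as `(1, 5)`, have squared length `26 > 2 · 10`, so by the parallelogram law balls of
squared radius 5 around distinct points of `Λ` are disjoint. The residues `v - 5u` of the 25 points
with `|u|, |v| ≤ 2` are the integers `-12, …, 12` (balanced base-5 digits), which hit every class
mod 24, so the `5 × 5` squares, hence the balls of squared radius 8, around `Λ` cover `ℤ²`; the only
collision, `-12 ≡ 12`, makes `(0, 12)` a deep hole at squared distance 8 from `Λ`.
-/

def lattice : Set (Fin 2 → ℤ) := {c | ∃ a b : ℤ, c = a • ![1, 5] + b • ![0, 24]}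

lemma mem_lattice_iff {c : Fin 2 → ℤ} : c ∈ lattice ↔ 24 ∣ c 1 - 5 * c 0 := by
  constructor
  · rintro ⟨a, b, rfl⟩
    exact ⟨b, by simp; ring⟩
  · rintro ⟨b, hb⟩
    refine ⟨c 0, b, funext (Fin.forall_fin_two.2 ⟨by simp, by simp; linarith⟩)⟩

lemma twentysix_le_sq_add_sq {x y : ℤ} (h : 24 ∣ y - 5 * x) (hxy : x ≠ 0 ∨ y ≠ 0) :
    26 ≤ x ^ 2 + y ^ 2 := by
  by_contra! hlt
  have hx : -5 ≤ x ∧ x ≤ 5 := ⟨by nlinarith [sq_nonneg y], by nlinarith [sq_nonneg y]⟩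
  have hy : -5 ≤ y ∧ y ≤ 5 := ⟨by nlinarith [sq_nonneg x], by nlinarith [sq_nonneg x]⟩
  obtain ⟨hx₁, hx₂⟩ := hx
  obtain ⟨hy₁, hy₂⟩ := hy
  interval_cases x <;> interval_cases y <;> omega

lemma twentysix_le_dist_sq_of_mem_lattice {c₁ c₂ : Fin 2 → ℤ} (hc₁ : c₁ ∈ lattice)
    (hc₂ : c₂ ∈ lattice) (hne : c₁ ≠ c₂) :
    26 ≤ (c₁ 0 - c₂ 0) ^ 2 + (c₁ 1 - c₂ 1) ^ 2 := by
  rw [mem_lattice_iff] at hc₁ hc₂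
  refine twentysix_le_sq_add_sq ?_ ?_
  · omega
  · by_contra! h
    exact hne (funext (Fin.forall_fin_two.2 ⟨by omega, by omega⟩))

lemma disjoint_balls_five {c₁ c₂ : Fin 2 → ℤ} (hc₁ : c₁ ∈ lattice) (hc₂ : c₂ ∈ lattice)
    (hne : c₁ ≠ c₂) (z : Fin 2 → ℤ) :
    ¬ ((z 0 - c₁ 0) ^ 2 + (z 1 - c₁ 1) ^ 2 ≤ 5 ∧ (z 0 - c₂ 0) ^ 2 + (z 1 - c₂ 1) ^ 2 ≤ 5) := by
  rintro ⟨h₁, h₂⟩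
  have hdist := twentysix_le_dist_sq_of_mem_lattice hc₁ hc₂ hne
  have parallelogram (a b x : ℤ) : (a - b) ^ 2 ≤ 2 * ((x - a) ^ 2 + (x - b) ^ 2) := by
    have h := add_sq_le (a := a - x) (b := x - b)
    rwa [sub_add_sub_cancel, ← neg_sub x a, neg_sq] at h
  linarith [parallelogram (c₁ 0) (c₂ 0) (z 0), parallelogram (c₁ 1) (c₂ 1) (z 1)]

-- `t` is first reduced to `s ∈ [-12, 12)`, whose balanced base-5 digits are `-u` and `v`.
lemma exists_small_digits (t : ℤ) :
    ∃ u v : ℤ, |u| ≤ 2 ∧ |v| ≤ 2 ∧ 24 ∣ t - (v - 5 * u) := by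
  set s := (t + 12) % 24 - 12
  refine ⟨-((s + 2) / 5), (s + 2) % 5 - 2, abs_le.2 ⟨?_, ?_⟩, abs_le.2 ⟨?_, ?_⟩, ?_⟩ <;> omega

lemma exists_mem_lattice_dist_sq_le_eight (z : Fin 2 → ℤ) :
    ∃ c ∈ lattice, (z 0 - c 0) ^ 2 + (z 1 - c 1) ^ 2 ≤ 8 := by
  obtain ⟨u, v, hu, hv, hdvd⟩ := exists_small_digits (z 1 - 5 * z 0)
  have hu' : u ^ 2 ≤ 2 ^ 2 := sq_le_sq' (abs_le.1 hu).1 (abs_le.1 hu).2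
  have hv' : v ^ 2 ≤ 2 ^ 2 := sq_le_sq' (abs_le.1 hv).1 (abs_le.1 hv).2
  refine ⟨![z 0 - u, z 1 - v], mem_lattice_iff.2 ?_, ?_⟩ <;>
    simp only [Matrix.cons_val_zero, Matrix.cons_val_one, Matrix.cons_val_fin_one]
  · omega
  · linarith

lemma eight_le_dist_sq_deep_hole {c : Fin 2 → ℤ} (hc : c ∈ lattice) :
    8 ≤ c 0 ^ 2 + (12 - c 1) ^ 2 := by
  rw [mem_lattice_iff] at hc
  by_contra! hlt
  generalize c 0 = x, c 1 = y at *
  have hx : -2 ≤ x ∧ x ≤ 2 := ⟨by nlinarith [sq_nonneg (12 - y)], by nlinarith [sq_nonneg (12 - y)]⟩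
  have hy : 10 ≤ y ∧ y ≤ 14 := ⟨by nlinarith [sq_nonneg x], by nlinarith [sq_nonneg x]⟩
  obtain ⟨hx₁, hx₂⟩ := hx
  obtain ⟨hy₁, hy₂⟩ := hy
  interval_cases x <;> interval_cases y <;> omega

lemma sq_add_sq_le_five_or_eight_le (x y : ℤ) : x ^ 2 + y ^ 2 ≤ 5 ∨ 8 ≤ x ^ 2 + y ^ 2 := by
  by_contra! h
  have hx : -2 ≤ x ∧ x ≤ 2 := ⟨by nlinarith [sq_nonneg y], by nlinarith [sq_nonneg y]⟩
  have hy : -2 ≤ y ∧ y ≤ 2 := ⟨by nlinarith [sq_nonneg x], by nlinarith [sq_nonneg x]⟩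
  obtain ⟨hx₁, hx₂⟩ := hx
  obtain ⟨hy₁, hy₂⟩ := hy
  interval_cases x <;> interval_cases y <;> omega

/-- The lattice generated by `(1,5)` and `(0,24)` is quasi-perfect in the ℓ₂
metric: balls of squared radius `5` centered at lattice points are pairwise
disjoint in `ℤ²` while balls of squared radius `8` are not (packing radius √5);
balls of squared radius `8` cover `ℤ²` while balls of squared radius `5` do not
(covering radius √8); and `8` is the immediate successor of `5` in the set of
sums of two integer squares. -/
theorem stmt16 :
    (∀ c₁ ∈ {c : Fin 2 → ℤ | ∃ a b : ℤ, c = a • ![1, 5] + b • ![0, 24]},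
     ∀ c₂ ∈ {c : Fin 2 → ℤ | ∃ a b : ℤ, c = a • ![1, 5] + b • ![0, 24]},
      c₁ ≠ c₂ → ∀ z : Fin 2 → ℤ,
        ¬ ((z 0 - c₁ 0) ^ 2 + (z 1 - c₁ 1) ^ 2 ≤ 5 ∧
           (z 0 - c₂ 0) ^ 2 + (z 1 - c₂ 1) ^ 2 ≤ 5)) ∧
    ¬ (∀ c₁ ∈ {c : Fin 2 → ℤ | ∃ a b : ℤ, c = a • ![1, 5] + b • ![0, 24]},
       ∀ c₂ ∈ {c : Fin 2 → ℤ | ∃ a b : ℤ, c = a • ![1, 5] + b • ![0, 24]},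
        c₁ ≠ c₂ → ∀ z : Fin 2 → ℤ,
          ¬ ((z 0 - c₁ 0) ^ 2 + (z 1 - c₁ 1) ^ 2 ≤ 8 ∧
             (z 0 - c₂ 0) ^ 2 + (z 1 - c₂ 1) ^ 2 ≤ 8)) ∧
    (∀ z : Fin 2 → ℤ, ∃ c ∈ {c : Fin 2 → ℤ | ∃ a b : ℤ, c = a • ![1, 5] + b • ![0, 24]},
      (z 0 - c 0) ^ 2 + (z 1 - c 1) ^ 2 ≤ 8) ∧
    ¬ (∀ z : Fin 2 → ℤ, ∃ c ∈ {c : Fin 2 → ℤ | ∃ a b : ℤ, c = a • ![1, 5] + b • ![0, 24]},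
      (z 0 - c 0) ^ 2 + (z 1 - c 1) ^ 2 ≤ 5) ∧
    ((∃ x y : ℤ, (5 : ℤ) = x ^ 2 + y ^ 2) ∧ (∃ x y : ℤ, (8 : ℤ) = x ^ 2 + y ^ 2) ∧
      ∀ k : ℤ, (∃ x y : ℤ, k = x ^ 2 + y ^ 2) → 5 < k → 8 ≤ k) := by
  refine ⟨fun c₁ hc₁ c₂ hc₂ hne z => disjoint_balls_five hc₁ hc₂ hne z, ?_,
    exists_mem_lattice_dist_sq_le_eight, ?_, ⟨1, 2, by norm_num⟩, ⟨2, 2, by norm_num⟩, ?_⟩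
  · intro h
    exact h 0 (mem_lattice_iff.2 (by simp)) ![4, -4] (mem_lattice_iff.2 (by simp))
      (fun h0 => by simpa using congrFun h0 0) ![2, -2] (by simp)
  · intro h
    obtain ⟨c, hc, hle⟩ := h ![0, 12]
    have := eight_le_dist_sq_deep_hole hc
    simp only [Matrix.cons_val_zero, Matrix.cons_val_one, Matrix.cons_val_fin_one, zero_sub,
      neg_sq] at hle
    linarith
  · rintro k ⟨x, y, rfl⟩ h5
    exact (sq_add_sq_le_five_or_eight_le x y).resolve_left (not_le.2 h5)
end

section
/- The lattice in ℤ² generated by (3,5) and (6,−1) is quasi-perfect in the ℓ_2 metric with packing radius 3: the balls B_2²(c,3), c ∈ Λ, are pairwise disjoint, they do not cover ℤ², and the balls of radius √10 centered at Λ cover ℤ². -/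
/-!
The lattice `Λ` is the kernel of `ψ(u, v) = u + 6v mod 33`: both generators lie in it, and the
kernel has index `33 = det Λ`. Since `ψ(z - c) = ψ z` for `c ∈ Λ`, two radius-`3` balls around
distinct lattice points meet exactly when `ψ` fails to be injective on the `29` integer points of
the disk of radius `3`, and the radius-`√10` balls cover `ℤ²` exactly when `ψ` maps the `37`
integer points of the disk of radius `√10` onto `ℤ/33`. The point `(0, 4)` has residue `24`, which
no point of the radius-`3` disk attains. These three finite facts are checked by evaluation.
-/

section
variable {A G : Type*} [AddCommGroup A] [AddGroup G] (φ : A →+ G) {D : Set A}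

theorem AddMonoidHom.eq_of_sub_mem_of_injOn (hD : Set.InjOn φ D) {c₁ c₂ z : A}
    (hc₁ : φ c₁ = 0) (hc₂ : φ c₂ = 0) (hz₁ : z - c₁ ∈ D) (hz₂ : z - c₂ ∈ D) : c₁ = c₂ :=
  sub_right_injective <| hD hz₁ hz₂ <| by simp [hc₁, hc₂]

theorem AddMonoidHom.sub_notMem_of_notMem_image {z : A} (hz : φ z ∉ φ '' D) {c : A}
    (hc : φ c = 0) : z - c ∉ D :=
  fun h => hz ⟨z - c, h, by simp [hc]⟩

theorem AddMonoidHom.exists_sub_mem_of_surjOn (hD : Set.SurjOn φ D Set.univ) (z : A) :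
    ∃ c, φ c = 0 ∧ z - c ∈ D := by
  obtain ⟨e, he, hφe⟩ := hD (Set.mem_univ (φ z))
  exact ⟨z - e, by simp [hφe], by rwa [sub_sub_cancel]⟩

end

namespace QuasiPerfectLattice

open Finset

def normSq (e : Fin 2 → ℤ) : ℤ := e 0 ^ 2 + e 1 ^ 2

def residue : (Fin 2 → ℤ) →+ ZMod 33 where
  toFun e := e 0 + 6 * e 1
  map_zero' := by simp
  map_add' e f := by push_cast [Pi.add_apply]; ring

theorem residue_apply (e : Fin 2 → ℤ) : residue e = e 0 + 6 * e 1 := rfl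

theorem residue_eq_zero_iff (c : Fin 2 → ℤ) :
    residue c = 0 ↔ ∃ a b : ℤ, c = a • ![3, 5] + b • ![6, -1] := by
  rw [residue_apply, ← Int.cast_ofNat, ← Int.cast_mul, ← Int.cast_add,
    ZMod.intCast_zmod_eq_zero_iff_dvd]
  constructor
  · rintro ⟨k, hk⟩
    refine ⟨k, 5 * k - c 1, ?_⟩
    ext i
    fin_cases i <;> simp <;> omega
  · rintro ⟨a, b, rfl⟩
    exact ⟨a, by simp; ring⟩

-- `noncomputable` only for code generation (the order on `ℤ` comes from a noncomputable
-- instance); the kernel still evaluates `smallDisk` in the `decide` proofs below.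
noncomputable def smallDisk (r : ℤ) : Finset (Fin 2 → ℤ) :=
  (Fintype.piFinset fun _ => Icc (-3) 3).filter fun e => normSq e ≤ r

theorem coe_smallDisk {r : ℤ} (hr : r < 16) :
    (smallDisk r : Set (Fin 2 → ℤ)) = {e | normSq e ≤ r} := by
  ext e
  simp only [smallDisk, coe_filter, Fintype.mem_piFinset, mem_Icc, Set.mem_ofPred_eq,
    and_iff_right_iff_imp]
  intro he
  rw [normSq] at he
  rw [Fin.forall_fin_two]
  have h₀ := abs_lt_of_sq_lt_sq' (show e 0 ^ 2 < 4 ^ 2 by linarith [sq_nonneg (e 1)])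
    (by norm_num)
  have h₁ := abs_lt_of_sq_lt_sq' (show e 1 ^ 2 < 4 ^ 2 by linarith [sq_nonneg (e 0)])
    (by norm_num)
  omega

theorem injOn_residue_normSq_le_nine : Set.InjOn residue {e | normSq e ≤ 9} := by
  have h : ∀ e ∈ smallDisk 9, ∀ f ∈ smallDisk 9, residue e = residue f → e = f := by decide
  rw [← coe_smallDisk (by norm_num)]
  exact fun e he f hf => h e he f hf

theorem residue_notMem_image_normSq_le_nine :
    residue ![0, 4] ∉ residue '' {e | normSq e ≤ 9} := by
  have h : ∀ e ∈ smallDisk 9, residue e ≠ residue ![0, 4] := by decide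
  rw [← coe_smallDisk (by norm_num)]
  rintro ⟨e, he, hres⟩
  exact h e he hres

theorem surjOn_residue_normSq_le_ten : Set.SurjOn residue {e | normSq e ≤ 10} Set.univ := by
  have h : ∀ x : ZMod 33, ∃ e ∈ smallDisk 10, residue e = x := by decide
  rw [← coe_smallDisk (by norm_num)]
  intro x _
  obtain ⟨e, he, hres⟩ := h x
  exact ⟨e, he, hres⟩

end QuasiPerfectLattice

open QuasiPerfectLattice in
/-- The lattice generated by `(3,5)` and `(6,-1)` is quasi-perfect in the ℓ₂
metric with packing radius `3`: the balls of radius `3` centered at lattice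
points are pairwise disjoint in `ℤ²`, they do not cover `ℤ²`, and the balls of
radius `√10` centered at lattice points cover `ℤ²`. -/
theorem stmt17 :
    (∀ c₁ ∈ {c : Fin 2 → ℤ | ∃ a b : ℤ, c = a • ![3, 5] + b • ![6, -1]},
     ∀ c₂ ∈ {c : Fin 2 → ℤ | ∃ a b : ℤ, c = a • ![3, 5] + b • ![6, -1]},
      c₁ ≠ c₂ → ∀ z : Fin 2 → ℤ,
        ¬ ((z 0 - c₁ 0) ^ 2 + (z 1 - c₁ 1) ^ 2 ≤ 9 ∧
           (z 0 - c₂ 0) ^ 2 + (z 1 - c₂ 1) ^ 2 ≤ 9)) ∧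
    ¬ (∀ z : Fin 2 → ℤ, ∃ c ∈ {c : Fin 2 → ℤ | ∃ a b : ℤ, c = a • ![3, 5] + b • ![6, -1]},
      (z 0 - c 0) ^ 2 + (z 1 - c 1) ^ 2 ≤ 9) ∧
    (∀ z : Fin 2 → ℤ, ∃ c ∈ {c : Fin 2 → ℤ | ∃ a b : ℤ, c = a • ![3, 5] + b • ![6, -1]},
      (z 0 - c 0) ^ 2 + (z 1 - c 1) ^ 2 ≤ 10) := by
  refine ⟨?_, ?_, ?_⟩
  · rintro c₁ hc₁ c₂ hc₂ hne z ⟨hz₁, hz₂⟩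
    exact hne <| residue.eq_of_sub_mem_of_injOn injOn_residue_normSq_le_nine
      ((residue_eq_zero_iff c₁).2 hc₁) ((residue_eq_zero_iff c₂).2 hc₂) hz₁ hz₂
  · intro hcover
    obtain ⟨c, hc, hz⟩ := hcover ![0, 4]
    exact residue.sub_notMem_of_notMem_image residue_notMem_image_normSq_le_nine
      ((residue_eq_zero_iff c).2 hc) hz
  · intro z
    obtain ⟨c, hc, hz⟩ := residue.exists_sub_mem_of_surjOn surjOn_residue_normSq_le_ten z
    exact ⟨c, (residue_eq_zero_iff c).1 hc, hz⟩
end
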